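/- arXiv:1407.6849 — 6 statements merged into one kernel-verified Lean document; each statement's English description precedes it below -/
import Mathlib

section
/- (Main Theorem.) Let (ρ, ψ, ψ₁, α) be a projective 2-representation of a group G on V. Then for all r, g, h ∈ G and every η ∈ X(r), β_{grg⁻¹,h}(β_{r,g}(η)) = (α(h,g,r) · α(hgrg⁻¹h⁻¹, h, g) · α(h, grg⁻¹, g)⁻¹) • β_{r,hg}(η); that is, the diagram formed by β_{r,hg} : X(r) → X(hgrg⁻¹h⁻¹) and the composite β_{grg⁻¹,h} ∘ β_{r,g} commutes up to the scalar factor α(h,g,r) · α(hgrg⁻¹h⁻¹,h,g) / α(h,grg⁻¹,g). -/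
open CategoryTheory

/-- A projective 2-representation of a group `G` on a `k`-linear category `V`,
with cocycle data `α : G → G → G → kˣ`. -/
structure ProjTwoRep (k : Type*) [Field k] (G : Type*) [Group G]
    (V : Type*) [Category V] [Preadditive V] [CategoryTheory.Linear k V] where
  /-- the underlying functors -/
  ρ : G → V ⥤ V
  /-- each `ρ g` is an equivalence of categories -/
  equiv : ∀ g : G, (ρ g).IsEquivalence
  /-- the coherence isomorphisms `ψ_{g,h} : ρ h ⋙ ρ g ≅ ρ (g * h)` -/
  ψ : ∀ g h : G, ρ h ⋙ ρ g ≅ ρ (g * h)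
  /-- the unit isomorphism `ψ₁ : ρ 1 ≅ 𝟭 V` -/
  ψ₁ : ρ 1 ≅ 𝟭 V
  /-- the cocycle data -/
  α : G → G → G → kˣ
  /-- condition (i): `ψ_{g,hk} ∘ ρ(g)(ψ_{h,k}) = α(g,h,k) • (ψ_{gh,k} ∘ ψ_{g,h} ρ(k))` -/
  cond_i : ∀ (g h j : G) (X : V),
    (ρ g).map ((ψ h j).hom.app X) ≫ (ψ g (h * j)).hom.app X ≫
        eqToHom (by rw [mul_assoc]) =
      ((α g h j : kˣ) : k) •
        ((ψ g h).hom.app ((ρ j).obj X) ≫ (ψ (g * h) j).hom.app X)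
  /-- condition (ii), left part: `(ψ_{1,g})_X = (ψ₁)_{ρ(g)(X)}` -/
  cond_ii_left : ∀ (g : G) (X : V),
    (ψ 1 g).hom.app X = ψ₁.hom.app ((ρ g).obj X) ≫ eqToHom (by rw [one_mul]; rfl)
  /-- condition (ii), right part: `(ψ_{g,1})_X = ρ(g)((ψ₁)_X)` -/
  cond_ii_right : ∀ (g : G) (X : V),
    (ψ g 1).hom.app X = (ρ g).map (ψ₁.hom.app X) ≫ eqToHom (by rw [mul_one]; rfl)

variable {k : Type*} [Field k] {G : Type*} [Group G]
variable {V : Type*} [Category V] [Preadditive V] [CategoryTheory.Linear k V]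

/-- The categorical character structure map `β_{g,h} : X(g) → X(hgh⁻¹)`, sending a
natural transformation `η : 𝟭 V ⟶ ρ g` to the composite described in
Definition 3.? (string diagram `img36`). -/
def charBeta (ρ : G → V ⥤ V) (ψ : ∀ g h : G, ρ h ⋙ ρ g ≅ ρ (g * h))
    (ψ₁ : ρ 1 ≅ 𝟭 V) (g h : G) (η : 𝟭 V ⟶ ρ g) : 𝟭 V ⟶ ρ (h * g * h⁻¹) :=
  ψ₁.inv ≫
  eqToHom (show ρ 1 = ρ (h * h⁻¹) by rw [mul_inv_cancel]) ≫
  (ψ h h⁻¹).inv ≫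
  Functor.whiskerLeft (ρ h⁻¹) (Functor.whiskerRight η (ρ h)) ≫
  Functor.whiskerLeft (ρ h⁻¹) (ψ h g).hom ≫
  eqToHom (show ρ h⁻¹ ⋙ ρ (h * g) = ρ h⁻¹ ⋙ ρ (h * g * h⁻¹ * h) by
    rw [inv_mul_cancel_right]) ≫
  Functor.whiskerLeft (ρ h⁻¹) (ψ (h * g * h⁻¹) h).inv ≫
  Functor.whiskerRight (ψ h h⁻¹).hom (ρ (h * g * h⁻¹)) ≫
  eqToHom (show ρ (h * h⁻¹) ⋙ ρ (h * g * h⁻¹) = ρ 1 ⋙ ρ (h * g * h⁻¹) by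
    rw [mul_inv_cancel]) ≫
  Functor.whiskerRight ψ₁.hom (ρ (h * g * h⁻¹))

/-! On the essential image of the equivalence `ρ y`, the component of `β_{p,y}(χ)` is just
`ρ(y)(χ)` followed by `ψ_{y,p}` and `ψ_{ypy⁻¹,y}⁻¹`: the unit and the cup `ψ_{y,y⁻¹}` cancel by
naturality, `ρ y` being full. Evaluating both sides of the theorem at `ρ(hg)Y` and precomposing
with `ψ_{h,g}`, the identity then follows from naturality of `ψ_{h,g}` and the cocycle condition
at `(h, grg⁻¹, g)`, `(h, g, r)` and `(hgrg⁻¹h⁻¹, h, g)`. -/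

lemma CategoryTheory.NatTrans.naturality_of_full {C D E : Type*} [Category C] [Category D]
    [Category E] {G : C ⥤ D} [G.Full] {K H : D ⥤ E} (θ : G ⋙ K ⟶ G ⋙ H) {X Y : C}
    (u : G.obj X ⟶ G.obj Y) :
    K.map u ≫ θ.app Y = θ.app X ≫ H.map u := by
  simpa using θ.naturality (G.preimage u)

lemma charBeta_app_obj {C : Type*} [Category C] (ρ : G → C ⥤ C)
    (ψ : ∀ g h : G, ρ h ⋙ ρ g ≅ ρ (g * h)) (ψ₁ : ρ 1 ≅ 𝟭 C) (p y : G) [(ρ y).Full]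
    (χ : 𝟭 C ⟶ ρ p) (X : C) :
    (charBeta ρ ψ ψ₁ p y χ).app ((ρ y).obj X) =
      (ρ y).map (χ.app X) ≫ (ψ y p).hom.app X ≫
        eqToHom (by rw [inv_mul_cancel_right]) ≫ (ψ (y * p * y⁻¹) y).inv.app X := by
  let θ : ρ y ⋙ 𝟭 C ⟶ ρ y ⋙ ρ (y * p * y⁻¹) :=
    Functor.whiskerRight χ (ρ y) ≫ (ψ y p).hom ≫
      eqToHom (by rw [inv_mul_cancel_right]) ≫ (ψ (y * p * y⁻¹) y).inv
  let u : (ρ y).obj ((ρ y⁻¹).obj ((ρ y).obj X)) ≅ (ρ y).obj X :=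
    (ψ y y⁻¹).app _ ≪≫ eqToIso (by rw [mul_inv_cancel]) ≪≫ ψ₁.app _
  have hθ := NatTrans.naturality_of_full θ u.hom
  have hβ : (charBeta ρ ψ ψ₁ p y χ).app ((ρ y).obj X) =
      u.inv ≫ θ.app ((ρ y⁻¹).obj ((ρ y).obj X)) ≫ (ρ (y * p * y⁻¹)).map u.hom := by
    simp [charBeta, θ, u, eqToHom_app, eqToHom_map]
  rw [hβ, ← hθ, Functor.id_map, Iso.inv_hom_id_assoc]
  simp [θ, eqToHom_app]

namespace ProjTwoRep

variable (P : ProjTwoRep k G V)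

lemma map_ψ_hom_comp_ψ_hom (x y z : G) (X : V) :
    (P.ρ x).map ((P.ψ y z).hom.app X) ≫ (P.ψ x (y * z)).hom.app X =
      P.α x y z • ((P.ψ x y).hom.app ((P.ρ z).obj X) ≫ (P.ψ (x * y) z).hom.app X ≫
        eqToHom (by rw [mul_assoc])) := by
  have h := P.cond_i x y z X
  rw [← Category.assoc, comp_eqToHom_iff] at h
  simp [h, Units.smul_def]

lemma map_ψ_inv_comp_ψ_hom (x y z : G) (X : V) :
    (P.ρ x).map ((P.ψ y z).inv.app X) ≫ (P.ψ x y).hom.app ((P.ρ z).obj X) =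
      (P.α x y z)⁻¹ • ((P.ψ x (y * z)).hom.app X ≫ eqToHom (by rw [mul_assoc]) ≫
        (P.ψ (x * y) z).inv.app X) := by
  rw [← cancel_mono ((P.ψ (x * y) z).hom.app X),
    ← cancel_epi ((P.ρ x).map ((P.ψ y z).hom.app X))]
  simp [← Functor.map_comp_assoc, reassoc_of% P.map_ψ_hom_comp_ψ_hom x y z X]

lemma ψ_inv_comp_map_ψ_hom (x y z : G) (X : V) :
    (P.ψ x y).inv.app ((P.ρ z).obj X) ≫ (P.ρ x).map ((P.ψ y z).hom.app X) =
      P.α x y z • ((P.ψ (x * y) z).hom.app X ≫ eqToHom (by rw [mul_assoc]) ≫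
        (P.ψ x (y * z)).inv.app X) := by
  rw [← cancel_mono ((P.ψ x (y * z)).hom.app X), ← cancel_epi ((P.ψ x y).hom.app ((P.ρ z).obj X))]
  simp [P.map_ψ_hom_comp_ψ_hom x y z X]

lemma ψ_hom_app_congr {a b a' b' : G} (ha : a = a') (hb : b = b') (X : V) :
    (P.ψ a b).hom.app X =
      eqToHom (by rw [ha, hb]) ≫ (P.ψ a' b').hom.app X ≫ eqToHom (by rw [ha, hb]) := by
  subst ha hb
  simp

lemma ψ_inv_app_congr {a b a' b' : G} (ha : a = a') (hb : b = b') (X : V) :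
    (P.ψ a b).inv.app X =
      eqToHom (by rw [ha, hb]) ≫ (P.ψ a' b').inv.app X ≫ eqToHom (by rw [ha, hb]) := by
  subst ha hb
  simp

attribute [local instance] ProjTwoRep.equiv

lemma charBeta_charBeta_app_obj (r g h : G) (η : 𝟭 V ⟶ P.ρ r) (Y : V) :
    (charBeta P.ρ P.ψ P.ψ₁ (g * r * g⁻¹) h (charBeta P.ρ P.ψ P.ψ₁ r g η)).app
        ((P.ρ (h * g)).obj Y) =
      (P.α h g r * P.α (h * (g * r * g⁻¹) * h⁻¹) h g * (P.α h (g * r * g⁻¹) g)⁻¹) •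
        ((charBeta P.ρ P.ψ P.ψ₁ r (h * g) η).app ((P.ρ (h * g)).obj Y) ≫
          eqToHom (by simp only [mul_inv_rev, mul_assoc])) := by
  rw [← cancel_epi ((P.ψ h g).hom.app Y), ← Functor.id_map ((P.ψ h g).hom.app Y),
    NatTrans.naturality, Functor.id_map]
  simp only [Functor.comp_obj, charBeta_app_obj, Functor.map_comp, Category.assoc, eqToHom_map]
  rw [reassoc_of% P.map_ψ_inv_comp_ψ_hom h (g * r * g⁻¹) g Y,
    P.ψ_hom_app_congr rfl (inv_mul_cancel_right _ g) Y]
  simp only [Units.smul_def, Linear.comp_smul, Linear.smul_comp, Category.assoc,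
    eqToHom_trans_assoc, eqToHom_refl, Category.id_comp]
  rw [reassoc_of% P.map_ψ_hom_comp_ψ_hom h g r Y]
  simp only [Units.smul_def, Linear.comp_smul, Linear.smul_comp, Category.assoc]
  rw [reassoc_of% (P.ψ h g).hom.naturality (η.app Y),
    P.ψ_inv_comp_map_ψ_hom (h * (g * r * g⁻¹) * h⁻¹) h g Y,
    P.ψ_hom_app_congr (inv_mul_cancel_right _ h) rfl Y,
    P.ψ_inv_app_congr
      (show h * g * r * (h * g)⁻¹ = h * (g * r * g⁻¹) * h⁻¹ by simp only [mul_inv_rev, mul_assoc])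
      rfl Y]
  simp only [Units.smul_def, Linear.comp_smul, Category.assoc, eqToHom_trans_assoc,
    Iso.inv_hom_id_app_assoc, smul_smul, eqToHom_refl, Category.id_comp, Category.comp_id,
    eqToHom_trans]
  congr 1
  push_cast
  ring

end ProjTwoRep

/-- **Main Theorem.** The categorical character maps `β` of a projective
2-representation compose according to the transgressed cocycle: for all `r, g, h`
and `η ∈ X(r)`,
`β_{grg⁻¹,h}(β_{r,g}(η)) = (α(h,g,r)·α(hgrg⁻¹h⁻¹,h,g)·α(h,grg⁻¹,g)⁻¹) • β_{r,hg}(η)`. -/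
theorem ProjTwoRep.char_main {k : Type*} [Field k] {G : Type*} [Group G]
    {V : Type*} [Category V] [Preadditive V] [CategoryTheory.Linear k V]
    (P : ProjTwoRep k G V) (r g h : G) (η : 𝟭 V ⟶ P.ρ r) :
    charBeta P.ρ P.ψ P.ψ₁ (g * r * g⁻¹) h (charBeta P.ρ P.ψ P.ψ₁ r g η) =
      ((P.α h g r * P.α (h * (g * r * g⁻¹) * h⁻¹) h g *
          (P.α h (g * r * g⁻¹) g)⁻¹ : kˣ) : k) •
        (charBeta P.ρ P.ψ P.ψ₁ r (h * g) η ≫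
          eqToHom (show P.ρ (h * g * r * (h * g)⁻¹) = P.ρ (h * (g * r * g⁻¹) * h⁻¹) by
            rw [show h * g * r * (h * g)⁻¹ = h * (g * r * g⁻¹) * h⁻¹ by group])) := by
  have := P.equiv (h * g)
  apply ((Functor.whiskeringLeft V V V).obj (P.ρ (h * g))).map_injective
  ext Y
  simpa [eqToHom_app, Units.smul_def] using P.charBeta_charBeta_app_obj r g h η Y
end

section
/- Let (ρ, ψ, ψ₁, α) be a projective 2-representation of a group G on V. For all g, h ∈ G, the k-linear map β_{g,h} : X(g) → X(hgh⁻¹) is bijective, i.e., an isomorphism of k-vector spaces. -/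
open CategoryTheory

variable {k : Type*} [Field k] {G : Type*} [Group G]
variable {V : Type*} [Category V] [Preadditive V] [CategoryTheory.Linear k V]

/-!
Whiskering by the equivalences `ρ h⁻¹` and `ρ h` gives the fully faithful functor
`F ↦ ρ h⁻¹ ⋙ F ⋙ ρ h` on `V ⥤ V`, and `β_{g,h}` is this functor on `𝟭 V ⟶ ρ g`,
pre- and post-composed with isomorphisms `𝟭 V ≅ ρ h⁻¹ ⋙ ρ h` and
`ρ h⁻¹ ⋙ ρ g ⋙ ρ h ≅ ρ (h g h⁻¹)` built from `ψ` and `ψ₁`.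
-/

theorem CategoryTheory.Functor.FullyFaithful.bijective_comp_map_comp {C D : Type*}
    [Category C] [Category D] {F : C ⥤ D} (hF : F.FullyFaithful) {X Y : C} {A B : D}
    (c : A ⟶ F.obj X) [IsIso c] (d : F.obj Y ⟶ B) [IsIso d] :
    Function.Bijective (fun f : X ⟶ Y => c ≫ F.map f ≫ d) :=
  (hF.homEquiv.trans ((asIso c).symm.homCongr (asIso d))).bijective

namespace ProjTwoRep

def conjugation (P : ProjTwoRep k G V) (h : G) : (V ⥤ V) ⥤ (V ⥤ V) :=
  (Functor.whiskeringRight V V V).obj (P.ρ h) ⋙ (Functor.whiskeringLeft V V V).obj (P.ρ h⁻¹)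

instance (P : ProjTwoRep k G V) (h : G) : (P.conjugation h).IsEquivalence :=
  have := P.equiv h
  have := P.equiv h⁻¹
  inferInstanceAs (Functor.IsEquivalence (_ ⋙ _))

def idIsoConjugationObjId (P : ProjTwoRep k G V) (h : G) : 𝟭 V ≅ (P.conjugation h).obj (𝟭 V) :=
  P.ψ₁.symm ≪≫ eqToIso (show P.ρ 1 = P.ρ (h * h⁻¹) by rw [mul_inv_cancel]) ≪≫
    (P.ψ h h⁻¹).symm

def conjugationObjIso (P : ProjTwoRep k G V) (g h : G) :
    (P.conjugation h).obj (P.ρ g) ≅ P.ρ (h * g * h⁻¹) :=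
  Functor.isoWhiskerLeft (P.ρ h⁻¹) (P.ψ h g) ≪≫
    eqToIso (show P.ρ h⁻¹ ⋙ P.ρ (h * g) = P.ρ h⁻¹ ⋙ P.ρ (h * g * h⁻¹ * h) by
      rw [inv_mul_cancel_right]) ≪≫
    Functor.isoWhiskerLeft (P.ρ h⁻¹) (P.ψ (h * g * h⁻¹) h).symm ≪≫
    Functor.isoWhiskerRight (P.ψ h h⁻¹) (P.ρ (h * g * h⁻¹)) ≪≫
    eqToIso (show P.ρ (h * h⁻¹) ⋙ P.ρ (h * g * h⁻¹) = P.ρ 1 ⋙ P.ρ (h * g * h⁻¹) by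
      rw [mul_inv_cancel]) ≪≫
    Functor.isoWhiskerRight P.ψ₁ (P.ρ (h * g * h⁻¹))

theorem charBeta_eq (P : ProjTwoRep k G V) (g h : G) (η : 𝟭 V ⟶ P.ρ g) :
    charBeta P.ρ P.ψ P.ψ₁ g h η =
      (P.idIsoConjugationObjId h).hom ≫ (P.conjugation h).map η ≫
        (P.conjugationObjIso g h).hom := by
  ext X
  simp [charBeta, idIsoConjugationObjId, conjugationObjIso, conjugation]

end ProjTwoRep

/-- The categorical character structure map `β_{g,h} : X(g) → X(hgh⁻¹)` of a
projective 2-representation is bijective, i.e. an isomorphism of `k`-vector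
spaces. -/
theorem ProjTwoRep.charBeta_bijective {k : Type*} [Field k] {G : Type*} [Group G]
    {V : Type*} [Category V] [Preadditive V] [CategoryTheory.Linear k V]
    (P : ProjTwoRep k G V) (g h : G) :
    Function.Bijective (charBeta P.ρ P.ψ P.ψ₁ g h :
      (𝟭 V ⟶ P.ρ g) → (𝟭 V ⟶ P.ρ (h * g * h⁻¹))) := by
  rw [funext (P.charBeta_eq g h)]
  exact (Functor.FullyFaithful.ofFullyFaithful (P.conjugation h)).bijective_comp_map_comp _ _
end

section
/- Let A be a multiplicative abelian group and let α : G³ → A be a 3-cocycle on a group G for the trivial G-action on A. Define the transgression T : G³ → A by T(x, a, b) = α(b, a, x) · α(b·a·x·a⁻¹·b⁻¹, b, a) · α(b, a·x·a⁻¹, a)⁻¹ (so T(x,a,b) is the value of τ(α) on the composable pair of inertia-groupoid arrows x → a·x·a⁻¹ → b·a·x·a⁻¹·b⁻¹). Then T is a 2-cocycle on the inertia groupoid ΛG: for all g, s, t, u ∈ G, T(g, s, t) · T(g, t·s, u) = T(g, s, u·t) · T(s·g·s⁻¹, t, u). -/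
/-- The transgression of a 3-cocycle `α` on `G` (trivial action): its value on the
composable pair of inertia-groupoid arrows `x → a·x·a⁻¹ → b·a·x·a⁻¹·b⁻¹` is
`α(b,a,x) · α(b·a·x·a⁻¹·b⁻¹, b, a) · α(b, a·x·a⁻¹, a)⁻¹`. -/
def transgression {G A : Type*} [Group G] [CommGroup A]
    (α : G → G → G → A) (x a b : G) : A :=
  α b a x * α (b * a * x * a⁻¹ * b⁻¹) b a * (α b (a * x * a⁻¹) a)⁻¹

/-- The transgression of a 3-cocycle on `G` (for the trivial `G`-action on `A`) is a
2-cocycle on the inertia groupoid `ΛG`. -/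
theorem transgression_is_two_cocycle {G A : Type*} [Group G] [CommGroup A]
    (α : G → G → G → A)
    (hα : ∀ g h k l : G,
      α h k l * α g (h * k) l * α g h k = α (g * h) k l * α g h (k * l))
    (g s t u : G) :
    transgression α g s t * transgression α g (t * s) u =
      transgression α g s (u * t) * transgression α (s * g * s⁻¹) t u := by
  have h1 := hα u t s g
  have h2 := hα u t (s * g * s⁻¹) s
  have h3 := hα u (t * s * g * s⁻¹ * t⁻¹) t s
  have h4 := hα (u * t * s * g * s⁻¹ * t⁻¹ * u⁻¹) u t s
  rw [show t * (s * g * s⁻¹) = t * s * g * s⁻¹ from by group,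
      show s * g * s⁻¹ * s = s * g from by group] at h2
  rw [show u * (t * s * g * s⁻¹ * t⁻¹) = u * t * s * g * s⁻¹ * t⁻¹ from by group,
      show t * s * g * s⁻¹ * t⁻¹ * t = t * s * g * s⁻¹ from by group] at h3
  rw [show u * t * s * g * s⁻¹ * t⁻¹ * u⁻¹ * u = u * t * s * g * s⁻¹ * t⁻¹ from by group] at h4
  simp only [transgression]
  rw [show u * (t * s) * g * (t * s)⁻¹ * u⁻¹ = u * t * s * g * s⁻¹ * t⁻¹ * u⁻¹ from by group,
      show (t * s) * g * (t * s)⁻¹ = t * s * g * s⁻¹ * t⁻¹ from by group,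
      show u * t * (s * g * s⁻¹) * t⁻¹ * u⁻¹ = u * t * s * g * s⁻¹ * t⁻¹ * u⁻¹ from by group,
      show t * (s * g * s⁻¹) * t⁻¹ = t * s * g * s⁻¹ * t⁻¹ from by group,
      show u * t * s * g * s⁻¹ * (u * t)⁻¹ = u * t * s * g * s⁻¹ * t⁻¹ * u⁻¹ from by group]
  -- transport to the additive world
  apply Additive.ofMul.injective
  replace h1 := congrArg Additive.ofMul h1
  replace h2 := congrArg Additive.ofMul h2
  replace h3 := congrArg Additive.ofMul h3
  replace h4 := congrArg Additive.ofMul h4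
  simp only [ofMul_mul, ofMul_inv] at h1 h2 h3 h4 ⊢
  have e1 := sub_eq_zero.mpr h1
  have e2 := sub_eq_zero.mpr h2
  have e3 := sub_eq_zero.mpr h3
  have e4 := sub_eq_zero.mpr h4
  rw [← sub_eq_zero]
  calc _ = (Additive.ofMul (α t s g) + Additive.ofMul (α u (t * s) g) + Additive.ofMul (α u t s)
            - (Additive.ofMul (α (u * t) s g) + Additive.ofMul (α u t (s * g))))
          - (Additive.ofMul (α t (s * g * s⁻¹) s) + Additive.ofMul (α u (t * s * g * s⁻¹) s)
            + Additive.ofMul (α u t (s * g * s⁻¹))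
            - (Additive.ofMul (α (u * t) (s * g * s⁻¹) s) + Additive.ofMul (α u t (s * g))))
          + (Additive.ofMul (α (t * s * g * s⁻¹ * t⁻¹) t s)
            + Additive.ofMul (α u (t * s * g * s⁻¹) s)
            + Additive.ofMul (α u (t * s * g * s⁻¹ * t⁻¹) t)
            - (Additive.ofMul (α (u * t * s * g * s⁻¹ * t⁻¹) t s)
              + Additive.ofMul (α u (t * s * g * s⁻¹ * t⁻¹) (t * s))))
          - (Additive.ofMul (α u t s)
            + Additive.ofMul (α (u * t * s * g * s⁻¹ * t⁻¹ * u⁻¹) (u * t) s)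
            + Additive.ofMul (α (u * t * s * g * s⁻¹ * t⁻¹ * u⁻¹) u t)
            - (Additive.ofMul (α (u * t * s * g * s⁻¹ * t⁻¹) t s)
              + Additive.ofMul (α (u * t * s * g * s⁻¹ * t⁻¹ * u⁻¹) u (t * s)))) := by abel
    _ = 0 := by rw [e1, e2, e3, e4]; abel
end

section
/- Let G be a group acting on a multiplicative abelian group A, and let α be a 3-cocycle on G with values in A. Then for every g ∈ G there exists a function γ : ℤ × ℤ → A such that for all l, m, n ∈ ℤ: γ(l+m, n) · γ(l, m) = γ(l, m+n) · (g^l • γ(m, n)) · α(g^l, g^m, g^n). (This is the statement that the pullback of α along the homomorphism ℤ → G, l ↦ g^l, is a coboundary, and shows that the induced map of inertia groupoids Λp : Λ𝒢 → ΛG is surjective on objects.) -/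
/-!
The cochain is built one value of `l` at a time by the recursion
`γ (l + 1, n) = g • γ (l, n) * α (g, g ^ l, g ^ n)`, started at `γ (0, n) = α (1, 1, g ^ n)⁻¹`;
every step is invertible, so this defines `γ` on all of `ℤ`. By the cocycle identity of `α` at
`(g, g ^ l, g ^ m, g ^ n)`, both sides of the required equation at `l + 1` arise from those at `l`
by applying `g •` and multiplying by the same factor, so the equation at `l + 1` is equivalent to
the one at `l`. At `l = 0` it is the normalisation `α (1, h, k) = α (1, 1, h * k) / α (1, 1, h)`
of a 3-cocycle.
-/

theorem Int.exists_forall_add_one_eq {X : Type*} (e : ℤ → X ≃ X) (x₀ : X) :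
    ∃ f : ℤ → X, f 0 = x₀ ∧ ∀ l, f (l + 1) = e l (f l) := by
  let f : ℤ → X := fun l =>
    l.inductionOn' 0 x₀ (fun k _ x => e k x) (fun k _ x => (e (k - 1)).symm x)
  refine ⟨f, Int.inductionOn'_self .., fun l => ?_⟩
  rcases le_or_gt 0 l with hl | hl
  · exact Int.inductionOn'_add_one hl
  · have h := Int.inductionOn'_sub_one (b := 0) (z := l + 1) (motive := fun _ => X) (zero := x₀)
      (succ := fun k _ x => e k x) (pred := fun k _ x => (e (k - 1)).symm x) (by omega)
    simp only [add_sub_cancel_right] at h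
    change f l = (e l).symm (f (l + 1)) at h
    rw [h, Equiv.apply_symm_apply]

theorem Int.forall_of_add_one_iff {p : ℤ → Prop} (h0 : p 0) (h : ∀ l, p (l + 1) ↔ p l) :
    ∀ l, p l := by
  intro l
  induction l using Int.induction_on with
  | zero => exact h0
  | succ l ih => exact (h l).2 ih
  | pred l ih => exact (h (-l - 1)).1 (by rwa [sub_add_cancel])

section IsMulCocycle₃

def IsMulCocycle₃ {G M : Type*} [Mul G] [CommGroup M] [SMul G M] (f : G → G → G → M) : Prop :=
  ∀ g h k l : G, g • f h k l * f g (h * k) l * f g h k = f (g * h) k l * f g h (k * l)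

variable {G M : Type*} [Monoid G] [CommGroup M] [MulAction G M]

theorem map_one_fst_of_isMulCocycle₃ {f : G → G → G → M} (hf : IsMulCocycle₃ f) (h k : G) :
    f 1 h k = f 1 1 (h * k) / f 1 1 h := by
  have hcocycle := hf 1 1 h k
  rw [one_smul, one_mul, one_mul, mul_assoc, mul_right_inj] at hcocycle
  exact eq_div_of_mul_eq' hcocycle

end IsMulCocycle₃

namespace PullbackAlongZPow

variable {G A : Type*} [Group G] [CommGroup A] [MulDistribMulAction G A]
  (α : G → G → G → A) (g : G) (γ : ℤ → ℤ → A)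

def BoundsAt (l : ℤ) : Prop :=
  ∀ m n : ℤ, γ (l + m) n * γ l m = γ l (m + n) * (g ^ l • γ m n) * α (g ^ l) (g ^ m) (g ^ n)

variable {α g γ}

theorem boundsAt_zero (hα : IsMulCocycle₃ α) (hγ₀ : ∀ n, γ 0 n = (α 1 1 (g ^ n))⁻¹) :
    BoundsAt α g γ 0 := by
  intro m n
  rw [zero_add, zpow_zero, one_smul, hγ₀, hγ₀, map_one_fst_of_isMulCocycle₃ hα (g ^ m),
    ← zpow_add, div_eq_mul_inv, mul_comm _ (γ m n), mul_assoc, inv_mul_cancel_left]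

theorem boundsAt_add_one_iff (hα : IsMulCocycle₃ α)
    (hγ : ∀ l n, γ (l + 1) n = g • γ l n * α g (g ^ l) (g ^ n)) (l : ℤ) :
    BoundsAt α g γ (l + 1) ↔ BoundsAt α g γ l := by
  refine forall₂_congr fun m n => ?_
  have hpow : g * g ^ l = g ^ (l + 1) := by rw [← zpow_one_add, add_comm]
  have hcocycle : g • α (g ^ l) (g ^ m) (g ^ n) * (α g (g ^ (l + m)) (g ^ n) * α g (g ^ l) (g ^ m))
      = α (g ^ (l + 1)) (g ^ m) (g ^ n) * α g (g ^ l) (g ^ (m + n)) := by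
    simpa only [← zpow_add, hpow, mul_assoc] using hα g (g ^ l) (g ^ m) (g ^ n)
  have hL : γ (l + 1 + m) n * γ (l + 1) m = g • (γ (l + m) n * γ l m) *
      (α g (g ^ (l + m)) (g ^ n) * α g (g ^ l) (g ^ m)) := by
    rw [add_right_comm, hγ, hγ, smul_mul']
    ac_rfl
  have hR : γ (l + 1) (m + n) * (g ^ (l + 1) • γ m n) * α (g ^ (l + 1)) (g ^ m) (g ^ n)
      = g • (γ l (m + n) * (g ^ l • γ m n) * α (g ^ l) (g ^ m) (g ^ n)) *
        (α g (g ^ (l + m)) (g ^ n) * α g (g ^ l) (g ^ m)) := by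
    rw [smul_mul', smul_mul', smul_smul, hpow, hγ, mul_assoc _ (g • α _ _ _), hcocycle]
    ac_rfl
  rw [hL, hR, mul_left_inj, smul_left_cancel_iff]

end PullbackAlongZPow

open PullbackAlongZPow in
/-- Since `H³(ℤ, A) = 0`, the pullback of a 3-cocycle `α` on `G` along the
homomorphism `ℤ → G`, `l ↦ g^l`, is a coboundary: there is a 2-cochain
`γ : ℤ × ℤ → A` with `d_g γ = (l ↦ g^l)^* α`. This shows the induced map of
inertia groupoids `Λp : Λ𝒢 → ΛG` is surjective on objects. -/
theorem exists_cochain_bounding_pullback_cocycle {G A : Type*} [Group G]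
    [CommGroup A] [MulDistribMulAction G A]
    (α : G → G → G → A)
    (hα : ∀ g h k l : G,
      (g • α h k l) * α g (h * k) l * α g h k = α (g * h) k l * α g h (k * l))
    (g : G) :
    ∃ γ : ℤ × ℤ → A, ∀ l m n : ℤ,
      γ (l + m, n) * γ (l, m) =
        γ (l, m + n) * (g ^ l • γ (m, n)) * α (g ^ l) (g ^ m) (g ^ n) := by
  let step (l n : ℤ) : A ≃ A :=
    (MulAction.toPerm g).trans (Equiv.mulRight (α g (g ^ l) (g ^ n)))
  obtain ⟨γ, hγ₀, hγ⟩ := Int.exists_forall_add_one_eq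
    (fun l => Equiv.piCongrRight (step l)) (fun n => (α 1 1 (g ^ n))⁻¹)
  refine ⟨fun p => γ p.1 p.2, Int.forall_of_add_one_iff (boundsAt_zero hα (congrFun hγ₀))
    (boundsAt_add_one_iff hα (fun l n => congrFun (hγ l) n))⟩
end

section
/- Let G be a group acting on a multiplicative abelian group A, α a 3-cocycle on G with values in A, and g, s ∈ G; set f = s·g·s⁻¹. Suppose γ : ℤ × ℤ → A satisfies γ(l+m,n) · γ(l,m) = γ(l,m+n) · (g^l • γ(m,n)) · α(g^l, g^m, g^n) for all l,m,n ∈ ℤ, and φ : ℤ × ℤ → A satisfies φ(l+m,n) · φ(l,m) = φ(l,m+n) · (f^l • φ(m,n)) · α(f^l, f^m, f^n) for all l,m,n ∈ ℤ. Define ξ : ℤ × ℤ → A by ξ(m, n) = φ(m, n) · (s • γ(m, n))⁻¹ · α(f^m, s, g^n) · (α(f^m, f^n, s) · α(s, g^m, g^n))⁻¹. Then ξ is a 2-cocycle for the ℤ-action on A induced by f, i.e., ξ(l+m, n) · ξ(l, m) = ξ(l, m+n) · (f^l • ξ(m, n)) for all l, m, n ∈ ℤ. -/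
private lemma helper_add {A : Type*} [AddCommGroup A]
    (p1 p2 p3 p4 c1 c2 c3 c4 u1 u2 u3 u4 u5 v2 v3 v4 v5 w2 w4 w5 w6 t1 t3 t4 t6 : A)
    (hp : p1 + p2 = p3 + p4 + u1) (hc : c1 + c2 = c3 + c4 + t1)
    (h1 : u2 + u3 + u1 = u4 + u5) (h2 : v2 + v3 + v4 = v5 + u5)
    (h3 : w2 + v3 + w4 = w5 + w6) (h4 : t1 + t3 + t4 = w5 + t6) :
    p1 - c1 + v5 - (u4 + t3) + (p2 - c2 + w4 - (v4 + t4)) =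
      p3 - c3 + w6 - (u3 + t6) + (p4 - c4 + v2 - (u2 + w2)) := by
  linear_combination (norm := abel) hp - hc + h1 - h2 + h3 - h4

private lemma helper_mul {A : Type*} [CommGroup A]
    (p1 p2 p3 p4 c1 c2 c3 c4 u1 u2 u3 u4 u5 v2 v3 v4 v5 w2 w4 w5 w6 t1 t3 t4 t6 : A)
    (hp : p1 * p2 = p3 * p4 * u1) (hc : c1 * c2 = c3 * c4 * t1)
    (h1 : u2 * u3 * u1 = u4 * u5) (h2 : v2 * v3 * v4 = v5 * u5)
    (h3 : w2 * v3 * w4 = w5 * w6) (h4 : t1 * t3 * t4 = w5 * t6) :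
    p1 * c1⁻¹ * v5 * (u4 * t3)⁻¹ * (p2 * c2⁻¹ * w4 * (v4 * t4)⁻¹) =
      p3 * c3⁻¹ * w6 * (u3 * t6)⁻¹ * (p4 * c4⁻¹ * v2 * (u2 * w2)⁻¹) := by
  have hp' := congrArg Additive.ofMul hp
  have hc' := congrArg Additive.ofMul hc
  have h1' := congrArg Additive.ofMul h1
  have h2' := congrArg Additive.ofMul h2
  have h3' := congrArg Additive.ofMul h3
  have h4' := congrArg Additive.ofMul h4
  simp only [ofMul_mul] at hp' hc' h1' h2' h3' h4'
  apply Additive.ofMul.injective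
  simp only [ofMul_mul, ofMul_inv]
  linear_combination (norm := abel) hp' - hc' + h1' - h2' + h3' - h4'

/-- Given two objects `(g, γ)` and `(f, φ)` of the inertia 2-groupoid `Λ𝒢` and an
element `s ∈ G` with `f = s·g·s⁻¹`, the 2-cochain
`ξ(m,n) = φ(m,n) · (s • γ(m,n))⁻¹ · α(f^m, s, g^n) · (α(f^m, f^n, s) · α(s, g^m, g^n))⁻¹`
is a 2-cocycle for the `ℤ`-action on `A` induced by `f`. -/
theorem xi_is_two_cocycle {G A : Type*} [Group G] [CommGroup A]
    [MulDistribMulAction G A]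
    (α : G → G → G → A)
    (hα : ∀ g h k l : G,
      (g • α h k l) * α g (h * k) l * α g h k = α (g * h) k l * α g h (k * l))
    (g s : G) (f : G) (hfs : f = s * g * s⁻¹)
    (γ : ℤ × ℤ → A)
    (hγ : ∀ l m n : ℤ,
      γ (l + m, n) * γ (l, m) =
        γ (l, m + n) * (g ^ l • γ (m, n)) * α (g ^ l) (g ^ m) (g ^ n))
    (φ : ℤ × ℤ → A)
    (hφ : ∀ l m n : ℤ,
      φ (l + m, n) * φ (l, m) =
        φ (l, m + n) * (f ^ l • φ (m, n)) * α (f ^ l) (f ^ m) (f ^ n))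
    (ξ : ℤ × ℤ → A)
    (hξ : ∀ m n : ℤ,
      ξ (m, n) = φ (m, n) * (s • γ (m, n))⁻¹ * α (f ^ m) s (g ^ n) *
        (α (f ^ m) (f ^ n) s * α s (g ^ m) (g ^ n))⁻¹)
    (l m n : ℤ) :
    ξ (l + m, n) * ξ (l, m) = ξ (l, m + n) * (f ^ l • ξ (m, n)) := by
  have hks : ∀ k : ℤ, f ^ k * s = s * g ^ k := by
    intro k
    rw [hfs, conj_zpow]
    group
  have Eφ := hφ l m n
  have Eγ := congrArg (s • ·) (hγ l m n)
  simp only [smul_mul', ← mul_smul, hks] at Eγ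
  have E1 := hα (f ^ l) (f ^ m) (f ^ n) s
  have E2 := hα (f ^ l) (f ^ m) s (g ^ n)
  have E3 := hα (f ^ l) s (g ^ m) (g ^ n)
  have E4 := hα s (g ^ l) (g ^ m) (g ^ n)
  rw [hks] at E1 E2 E3
  rw [hξ (l + m) n, hξ l m, hξ l (m + n), hξ m n]
  simp only [zpow_add, smul_mul', smul_inv', ← mul_smul, hks]
  exact helper_mul _ _ _ _ _ _ _ _ _ _ _ _ _ _ _ _ _ _ _ _ _ _ _ _ _
    Eφ Eγ E1 E2 E3 E4
end

section
/- Let k be a field, V a category equipped with a preadditive structure and a k-linear structure, G a group, and θ : G × G → kˣ a normalized 2-cochain. Consider the projective 2-representation of G on V given by ρ(g) = 𝟭_V, ψ_{g,h} = θ(g,h) • id, ψ₁ = id, with cocycle α = dθ. Then for all g, h ∈ G, the categorical character map β_{g,h} : X(g) → X(hgh⁻¹) (where X(g) is the space of natural transformations 𝟭_V ⟶ 𝟭_V for every g) is multiplication by the scalar θ(h, g) · θ(h·g·h⁻¹, h)⁻¹. In particular, if g and h commute, then β_{g,h} is multiplication by θ(h, g) / θ(g, h), so the joint trace of the pair (g,h)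 equals θ(h,g)/θ(g,h) times the dimension of X(g) when X(g) is finite dimensional. -/
open CategoryTheory

variable {k : Type*} [Field k] {G : Type*} [Group G]
variable {V : Type*} [Category V] [Preadditive V] [CategoryTheory.Linear k V]

/-- The coherence isomorphism `ψ_{g,h} = θ(g,h) • id` of the projective
2-representation of `G` on `V` given by a 2-cochain `θ`. -/
def thetaPsi (θ : G → G → kˣ) (g h : G) :
    ((fun _ : G => 𝟭 V) h) ⋙ ((fun _ : G => 𝟭 V) g) ≅ ((fun _ : G => 𝟭 V) (g * h)) where
  hom := ((θ g h : kˣ) : k) • 𝟙 (𝟭 V)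
  inv := (((θ g h)⁻¹ : kˣ) : k) • 𝟙 (𝟭 V)
  hom_inv_id := by
    ext X
    simp [smul_smul]
  inv_hom_id := by
    ext X
    simp [smul_smul]

/-- All coherence maps are scalars, so `β_{g,h}` multiplies by
`θ(h,h⁻¹)⁻¹ θ(h,g) θ(hgh⁻¹,h)⁻¹ θ(h,h⁻¹)`, and the `θ(h,h⁻¹)` factors cancel. -/
theorem charBeta_thetaPsi (θ : G → G → kˣ) (g h : G) (η : 𝟭 V ⟶ 𝟭 V) :
    charBeta (fun _ : G => 𝟭 V) (thetaPsi θ) (Iso.refl (𝟭 V)) g h η =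
      ((θ h g * (θ (h * g * h⁻¹) h)⁻¹ : kˣ) : k) • η := by
  ext X
  simp only [charBeta, thetaPsi, Iso.refl_inv, Iso.refl_hom, eqToHom_refl, Functor.whiskerRight_id',
    Category.comp_id, Category.id_comp, Linear.smul_comp, Linear.comp_smul, NatTrans.app_smul,
    NatTrans.comp_app, Functor.whiskerLeft_app, Functor.whiskerRight_app, Functor.id_map,
    NatTrans.id_app, Functor.comp_obj, Functor.id_obj, smul_smul]
  congr 1
  push_cast
  field_simp

theorem trivial_rep_char_general {k : Type*} [Field k] {G : Type*} [Group G]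
    {V : Type*} [Category V] [Preadditive V] [CategoryTheory.Linear k V]
    (θ : G → G → kˣ) (g h : G) :
    (∀ η : 𝟭 V ⟶ (𝟭 V : V ⥤ V),
      charBeta (fun _ : G => 𝟭 V) (thetaPsi θ) (Iso.refl (𝟭 V)) g h η =
        ((θ h g * (θ (h * g * h⁻¹) h)⁻¹ : kˣ) : k) • η) ∧
    (g * h = h * g →
      (∀ η : 𝟭 V ⟶ (𝟭 V : V ⥤ V),
        charBeta (fun _ : G => 𝟭 V) (thetaPsi θ) (Iso.refl (𝟭 V)) g h η =
          ((θ h g * (θ g h)⁻¹ : kˣ) : k) • η) ∧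
      (∀ _ : FiniteDimensional k (𝟭 V ⟶ (𝟭 V : V ⥤ V)),
        LinearMap.trace k (𝟭 V ⟶ (𝟭 V : V ⥤ V))
            (((θ h g * (θ g h)⁻¹ : kˣ) : k) •
              (LinearMap.id : (𝟭 V ⟶ (𝟭 V : V ⥤ V)) →ₗ[k] (𝟭 V ⟶ (𝟭 V : V ⥤ V)))) =
          ((θ h g * (θ g h)⁻¹ : kˣ) : k) *
            (Module.finrank k (𝟭 V ⟶ (𝟭 V : V ⥤ V)) : k))) := by
  refine ⟨charBeta_thetaPsi θ g h, fun hc => ⟨fun η => ?_, fun _ => ?_⟩⟩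
  · rw [charBeta_thetaPsi, Commute.mul_inv_cancel (Commute.symm hc)]
  · rw [map_smul, LinearMap.trace_id, smul_eq_mul]

/-- For the projective 2-representation `ρ(g) = 𝟭 V`, `ψ_{g,h} = θ(g,h) • id`,
`ψ₁ = id` associated to a normalised 2-cochain `θ`, the categorical character map
`β_{g,h} : X(g) → X(hgh⁻¹)` is multiplication by `θ(h,g) · θ(hgh⁻¹,h)⁻¹`.  In
particular, if `g` and `h` commute then `β_{g,h}` is multiplication by
`θ(h,g)/θ(g,h)`, and the joint trace of `(g,h)` is `θ(h,g)/θ(g,h)` times the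
dimension of `X(g)` when `X(g)` is finite dimensional. -/
theorem trivial_rep_char {k : Type*} [Field k] {G : Type*} [Group G]
    {V : Type*} [Category V] [Preadditive V] [CategoryTheory.Linear k V]
    (θ : G → G → kˣ) (hθ : ∀ g : G, θ 1 g = 1 ∧ θ g 1 = 1) (g h : G) :
    (∀ η : 𝟭 V ⟶ (𝟭 V : V ⥤ V),
      charBeta (fun _ : G => 𝟭 V) (thetaPsi θ) (Iso.refl (𝟭 V)) g h η =
        ((θ h g * (θ (h * g * h⁻¹) h)⁻¹ : kˣ) : k) • η) ∧
    (g * h = h * g →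
      (∀ η : 𝟭 V ⟶ (𝟭 V : V ⥤ V),
        charBeta (fun _ : G => 𝟭 V) (thetaPsi θ) (Iso.refl (𝟭 V)) g h η =
          ((θ h g * (θ g h)⁻¹ : kˣ) : k) • η) ∧
      (∀ _ : FiniteDimensional k (𝟭 V ⟶ (𝟭 V : V ⥤ V)),
        LinearMap.trace k (𝟭 V ⟶ (𝟭 V : V ⥤ V))
            (((θ h g * (θ g h)⁻¹ : kˣ) : k) •
              (LinearMap.id : (𝟭 V ⟶ (𝟭 V : V ⥤ V)) →ₗ[k] (𝟭 V ⟶ (𝟭 V : V ⥤ V)))) =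
          ((θ h g * (θ g h)⁻¹ : kˣ) : k) *
            (Module.finrank k (𝟭 V ⟶ (𝟭 V : V ⥤ V)) : k))) :=
  trivial_rep_char_general θ g h
end
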